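/- arXiv:1308.1264 — 2 statements merged into one kernel-verified Lean document; each statement's English description precedes it below -/
import Mathlib

section
/- Let s ∈ ℕ, γ > 0, ε > 0. Then ∫_{{x ∈ ℝ₊^s : ‖x‖_γ ≥ 1}} ‖x‖_γ^{−s−ε} dx = Γ(1/γ)^s / (ε · γ^{s−1} · Γ(s/γ)), where ‖x‖_γ = (Σ_{k=1}^s |x_k|^γ)^{1/γ}. -/
/-!
On the open orthant `C`, `N = pnorm γ` is positive and positively homogeneous of degree one, so
`C ∩ {N < R} = R • (C ∩ {N < 1})` has volume `R ^ s * V`, where `V = vol (C ∩ {N < 1})`. Hence `N`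
pushes Lebesgue measure on `C` forward to `V * s * r ^ (s - 1) dr` on `(0, ∞)`, and `∫_C F (N x) dx`
becomes a one-dimensional integral. For `F r = exp (-r ^ γ)` the left side factorises into
`Γ(1/γ + 1) ^ s`, which gives `V = Γ(1/γ + 1) ^ s / Γ(s/γ + 1)`; for `F r = r ^ (-s-ε) 1_{r ≥ 1}`
the right side is `V * s / ε`.
-/

open MeasureTheory Real Set

noncomputable def pnorm {s : ℕ} (γ : ℝ) (x : Fin s → ℝ) : ℝ := (∑ i, |x i| ^ γ) ^ (1 / γ)

open Module
open scoped Pointwise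

lemma lintegral_Ioo_mul_rpow_sub_one {n R : ℝ} (hn : 0 < n) (hR : 0 ≤ R) :
    ∫⁻ r in Ioo 0 R, ENNReal.ofReal (n * r ^ (n - 1)) = ENNReal.ofReal (R ^ n) := by
  have hint : IntervalIntegrable (fun r : ℝ => n * r ^ (n - 1)) volume 0 R :=
    (intervalIntegral.intervalIntegrable_rpow' (by linarith)).const_mul n
  rw [← ofReal_integral_eq_lintegral_ofReal
      ((intervalIntegrable_iff_integrableOn_Ioo_of_le hR).mp hint)
      (ae_restrict_of_forall_mem measurableSet_Ioo fun r hr => by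
        have := hr.1; positivity),
    ← integral_Ioc_eq_integral_Ioo, ← intervalIntegral.integral_of_le hR,
    intervalIntegral.integral_const_mul, integral_rpow (Or.inl (by linarith)), sub_add_cancel,
    zero_rpow hn.ne', sub_zero, mul_div_cancel₀ _ hn.ne']

lemma lintegral_mul_rpow_mul_exp_neg_rpow {n p : ℝ} (hn : 0 < n) (hp : 0 < p) :
    ∫⁻ r in Ioi 0, ENNReal.ofReal (n * r ^ (n - 1)) * ENNReal.ofReal (exp (-r ^ p)) =
      ENNReal.ofReal (Gamma (n / p + 1)) := by
  have hq : -1 < n - 1 := by linarith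
  rw [setLIntegral_congr_fun measurableSet_Ioi fun r hr => by
      rw [← ENNReal.ofReal_mul (by have := hr.out; positivity), mul_assoc],
    ← ofReal_integral_eq_lintegral_ofReal
      ((integrableOn_rpow_mul_exp_neg_rpow hq hp).const_mul n)
      (ae_restrict_of_forall_mem measurableSet_Ioi fun r hr => by
        have := hr.out; positivity),
    integral_const_mul, integral_rpow_mul_exp_neg_rpow hp hq, sub_add_cancel,
    Gamma_add_one (by positivity)]
  congr 1
  ring

lemma lintegral_mul_rpow_mul_indicator_Ici_one {n ε : ℝ} (hn : 0 ≤ n) (hε : 0 < ε) :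
    ∫⁻ r in Ioi 0, ENNReal.ofReal (n * r ^ (n - 1)) *
        (Ici 1).indicator (fun r => ENNReal.ofReal (r ^ (-n - ε))) r =
      ENNReal.ofReal (n / ε) := by
  have hexp : -1 - ε < -1 := by linarith
  calc ∫⁻ r in Ioi 0, ENNReal.ofReal (n * r ^ (n - 1)) *
        (Ici 1).indicator (fun r => ENNReal.ofReal (r ^ (-n - ε))) r
      = ∫⁻ r in Ici 1, ENNReal.ofReal (n * r ^ (-1 - ε)) := by
        simp_rw [← indicator_mul_right (Ici 1) (fun r => ENNReal.ofReal (n * r ^ (n - 1)))]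
        rw [lintegral_indicator measurableSet_Ici, Measure.restrict_restrict measurableSet_Ici,
          inter_eq_left.mpr (Ici_subset_Ioi.mpr one_pos)]
        refine setLIntegral_congr_fun measurableSet_Ici fun r hr => ?_
        have hr0 : 0 < r := one_pos.trans_le hr
        rw [← ENNReal.ofReal_mul (by positivity), mul_assoc, ← rpow_add hr0]
        ring_nf
    _ = ENNReal.ofReal (n / ε) := by
        rw [← setLIntegral_congr Ioi_ae_eq_Ici,
          ← ofReal_integral_eq_lintegral_ofReal
            ((integrableOn_Ioi_rpow_of_lt hexp one_pos).const_mul n)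
            (ae_restrict_of_forall_mem measurableSet_Ioi fun r hr => by
              have : (0 : ℝ) < r := one_pos.trans hr.out; positivity),
          integral_const_mul, integral_Ioi_rpow_of_lt hexp one_pos, one_rpow]
        congr 1
        rw [show -1 - ε + 1 = -ε by ring, neg_div_neg_eq, mul_one_div]

lemma inter_lt_eq_smul_inter_lt_one {E : Type*} [AddCommGroup E] [Module ℝ E] {C : Set E}
    {N : E → ℝ} (hC : ∀ x ∈ C, ∀ c : ℝ, 0 < c → c • x ∈ C)
    (hN : ∀ x ∈ C, ∀ c : ℝ, 0 < c → N (c • x) = c * N x) {R : ℝ} (hR : 0 < R) :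
    C ∩ {x | N x < R} = R • (C ∩ {x | N x < 1}) := by
  ext x
  rw [mem_smul_set_iff_inv_smul_mem₀ hR.ne']
  have hR' : 0 < R⁻¹ := inv_pos.mpr hR
  constructor
  · rintro ⟨hx, hNx⟩
    refine ⟨hC x hx _ hR', ?_⟩
    rw [mem_ofPred_eq, hN x hx _ hR', inv_mul_lt_one₀ hR]
    exact hNx
  · rintro ⟨hx, hNx⟩
    have hxC : x ∈ C := by simpa [smul_inv_smul₀ hR.ne'] using hC _ hx R hR
    refine ⟨hxC, ?_⟩
    rw [mem_ofPred_eq, hN x hxC _ hR', inv_mul_lt_one₀ hR] at hNx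
    exact hNx

section Homogeneous

variable {E : Type*} [NormedAddCommGroup E] [NormedSpace ℝ E] [FiniteDimensional ℝ E]
  [MeasurableSpace E] [BorelSpace E] (μ : Measure E) [μ.IsAddHaarMeasure] {C : Set E} {N : E → ℝ}

lemma measure_inter_lt_eq_pow_mul (hC : ∀ x ∈ C, ∀ c : ℝ, 0 < c → c • x ∈ C)
    (hN : ∀ x ∈ C, ∀ c : ℝ, 0 < c → N (c • x) = c * N x) {R : ℝ} (hR : 0 < R) :
    μ (C ∩ {x | N x < R}) = ENNReal.ofReal (R ^ finrank ℝ E) * μ (C ∩ {x | N x < 1}) := by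
  rw [inter_lt_eq_smul_inter_lt_one hC hN hR, Measure.addHaar_smul, abs_of_pos (pow_pos hR _)]

theorem map_restrict_eq_smul_withDensity [Nontrivial E] (hNm : Measurable N)
    (hC : ∀ x ∈ C, ∀ c : ℝ, 0 < c → c • x ∈ C)
    (hN : ∀ x ∈ C, ∀ c : ℝ, 0 < c → N (c • x) = c * N x) (hpos : ∀ x ∈ C, 0 < N x)
    (hfin : μ (C ∩ {x | N x < 1}) ≠ ⊤) :
    (μ.restrict C).map N = μ (C ∩ {x | N x < 1}) • (volume.restrict (Ioi 0)).withDensity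
      fun r => ENNReal.ofReal (finrank ℝ E * r ^ ((finrank ℝ E : ℝ) - 1)) := by
  have hn : (0 : ℝ) < finrank ℝ E := Nat.cast_pos.mpr finrank_pos
  have hIio : ∀ R, (μ.restrict C).map N (Iio R) =
      μ (C ∩ {x | N x < 1}) * ENNReal.ofReal (max R 0 ^ finrank ℝ E) := by
    intro R
    rw [Measure.map_apply hNm measurableSet_Iio, Measure.restrict_apply (hNm measurableSet_Iio),
      inter_comm]
    rcases le_or_gt R 0 with hR | hR
    · have hempty : C ∩ N ⁻¹' Iio R = ∅ :=
        eq_empty_of_forall_notMem fun x hx => (hpos x hx.1).not_ge (hx.2.out.le.trans hR)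
      rw [hempty, measure_empty, max_eq_right hR, zero_pow finrank_pos.ne', ENNReal.ofReal_zero,
        mul_zero]
    · rw [max_eq_left hR.le, mul_comm]
      exact measure_inter_lt_eq_pow_mul μ hC hN hR
  refine Measure.ext_of_generateFrom_of_iUnion (range Iio) (fun k : ℕ => Iio (k : ℝ))
    (borel_eq_generateFrom_Iio ℝ ▸ BorelSpace.measurable_eq) isPiSystem_Iio
    (iUnion_eq_univ_iff.mpr exists_nat_gt) (fun k => mem_range_self _)
    (fun k => by rw [hIio]; exact ENNReal.mul_ne_top hfin ENNReal.ofReal_ne_top) ?_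
  rintro _ ⟨R, rfl⟩
  rw [hIio, Measure.smul_apply, withDensity_apply _ measurableSet_Iio,
    Measure.restrict_restrict measurableSet_Iio, Iio_inter_Ioi, smul_eq_mul]
  rcases le_or_gt R 0 with hR | hR
  · rw [Ioo_eq_empty hR.not_gt, Measure.restrict_empty, lintegral_zero_measure, max_eq_right hR,
      zero_pow finrank_pos.ne', ENNReal.ofReal_zero]
  · rw [max_eq_left hR.le, lintegral_Ioo_mul_rpow_sub_one hn hR.le, rpow_natCast]

theorem setLIntegral_comp_eq_mul [Nontrivial E] (hNm : Measurable N)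
    (hC : ∀ x ∈ C, ∀ c : ℝ, 0 < c → c • x ∈ C)
    (hN : ∀ x ∈ C, ∀ c : ℝ, 0 < c → N (c • x) = c * N x) (hpos : ∀ x ∈ C, 0 < N x)
    (hfin : μ (C ∩ {x | N x < 1}) ≠ ⊤) {F : ℝ → ENNReal} (hF : Measurable F) :
    ∫⁻ x in C, F (N x) ∂μ = μ (C ∩ {x | N x < 1}) *
      ∫⁻ r in Ioi 0, ENNReal.ofReal (finrank ℝ E * r ^ ((finrank ℝ E : ℝ) - 1)) * F r := by
  rw [← lintegral_map hF hNm, map_restrict_eq_smul_withDensity μ hNm hC hN hpos hfin,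
    lintegral_smul_measure, lintegral_withDensity_eq_lintegral_mul _ (by fun_prop) hF]
  rfl

end Homogeneous

section pnorm

def posOrthant (s : ℕ) : Set (Fin s → ℝ) := univ.pi fun _ => Ioi 0

variable {s : ℕ} {γ : ℝ}

lemma pnorm_rpow (hγ : 0 < γ) (x : Fin s → ℝ) : pnorm γ x ^ γ = ∑ i, |x i| ^ γ := by
  rw [pnorm, one_div, rpow_inv_rpow (by positivity) hγ.ne']

lemma measurable_pnorm (γ : ℝ) : Measurable (pnorm (s := s) γ) := by
  unfold pnorm
  fun_prop

lemma pnorm_smul (hγ : 0 < γ) {c : ℝ} (hc : 0 ≤ c) (x : Fin s → ℝ) :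
    pnorm γ (c • x) = c * pnorm γ x := by
  simp only [pnorm, Pi.smul_apply, smul_eq_mul, abs_mul, abs_of_nonneg hc,
    mul_rpow hc (abs_nonneg _), ← Finset.mul_sum]
  rw [mul_rpow (by positivity) (by positivity), one_div, rpow_rpow_inv hc hγ.ne']

lemma abs_le_pnorm (hγ : 0 < γ) (x : Fin s → ℝ) (i : Fin s) : |x i| ≤ pnorm γ x := by
  rw [← rpow_le_rpow_iff (abs_nonneg _) (by unfold pnorm; positivity) hγ, pnorm_rpow hγ]
  exact Finset.single_le_sum (f := fun j => |x j| ^ γ) (fun j _ => by positivity)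
    (Finset.mem_univ i)

lemma volume_posOrthant_inter_pnorm_lt_one_ne_top (hγ : 0 < γ) :
    volume (posOrthant s ∩ {x | pnorm γ x < 1}) ≠ ⊤ := by
  refine (Metric.isBounded_iff_subset_closedBall 0 |>.mpr ⟨1, fun x hx => ?_⟩).measure_lt_top.ne
  rw [mem_closedBall_zero_iff, pi_norm_le_iff_of_nonneg zero_le_one]
  exact fun i => (abs_le_pnorm hγ x i).trans hx.2.out.le

lemma setLIntegral_posOrthant_exp_neg_pnorm_rpow (hγ : 0 < γ) :
    ∫⁻ x in posOrthant s, ENNReal.ofReal (exp (-pnorm γ x ^ γ)) =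
      ENNReal.ofReal (Gamma (1 / γ + 1) ^ s) := by
  have hprod : ∀ x : Fin s → ℝ, exp (-pnorm γ x ^ γ) = ∏ i, exp (-|x i| ^ γ) := fun x => by
    rw [pnorm_rpow hγ, ← exp_sum, Finset.sum_neg_distrib]
  have hint : IntegrableOn (fun y : ℝ => exp (-|y| ^ γ)) (Ioi 0) :=
    (integrableOn_rpow_mul_exp_neg_rpow neg_one_lt_zero hγ).congr_fun
      (fun y hy => by beta_reduce; rw [rpow_zero, one_mul, abs_of_pos hy.out]) measurableSet_Ioi
  have hval : ∫ y in Ioi 0, exp (-|y| ^ γ) = Gamma (1 / γ + 1) := by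
    rw [← integral_exp_neg_rpow hγ]
    exact setIntegral_congr_fun measurableSet_Ioi fun y hy => by rw [abs_of_pos hy.out]
  simp_rw [hprod, posOrthant, volume_pi, Measure.restrict_pi_pi]
  rw [← ofReal_integral_eq_lintegral_ofReal (Integrable.fintype_prod fun _ => hint)
      (ae_of_all _ fun x => by positivity),
    integral_fintype_prod_eq_pow (fun y => exp (-|y| ^ γ)), hval, Fintype.card_fin]

lemma setLIntegral_posOrthant_comp_pnorm (hs : 0 < s) (hγ : 0 < γ) {F : ℝ → ENNReal}
    (hF : Measurable F) :
    ∫⁻ x in posOrthant s, F (pnorm γ x) =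
      volume (posOrthant s ∩ {x | pnorm γ x < 1}) *
        ∫⁻ r in Ioi 0, ENNReal.ofReal (s * r ^ ((s : ℝ) - 1)) * F r := by
  have : Nonempty (Fin s) := ⟨⟨0, hs⟩⟩
  have hpos : ∀ x ∈ posOrthant s, 0 < pnorm γ x := fun x hx =>
    (abs_pos_of_pos (hx ⟨0, hs⟩ trivial)).trans_le (abs_le_pnorm hγ x _)
  simpa only [finrank_fin_fun] using setLIntegral_comp_eq_mul volume (C := posOrthant s)
    (measurable_pnorm γ) (fun x hx c hc i _ => mul_pos hc (hx i trivial))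
    (fun x _ c hc => pnorm_smul hγ hc.le x) hpos (volume_posOrthant_inter_pnorm_lt_one_ne_top hγ) hF

theorem volume_posOrthant_inter_pnorm_lt_one (hs : 0 < s) (hγ : 0 < γ) :
    volume (posOrthant s ∩ {x | pnorm γ x < 1}) =
      ENNReal.ofReal (Gamma (1 / γ + 1) ^ s / Gamma (s / γ + 1)) := by
  have hΓ : 0 < Gamma (s / γ + 1) := Gamma_pos_of_pos (by positivity)
  have h := setLIntegral_posOrthant_exp_neg_pnorm_rpow (s := s) hγ
  rw [setLIntegral_posOrthant_comp_pnorm hs hγ (by fun_prop : Measurable fun r : ℝ =>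
      ENNReal.ofReal (exp (-r ^ γ))), lintegral_mul_rpow_mul_exp_neg_rpow (by positivity) hγ] at h
  rw [ENNReal.ofReal_div_of_pos hΓ, ← h, ENNReal.mul_div_cancel_right
    (ENNReal.ofReal_pos.mpr hΓ).ne' ENNReal.ofReal_ne_top]

end pnorm

lemma Gamma_pow_div_Gamma_mul_div_eq {s : ℕ} {γ : ℝ} (hs : 0 < s) (hγ : 0 < γ) (ε : ℝ) :
    Gamma (1 / γ + 1) ^ s / Gamma (s / γ + 1) * (s / ε) =
      Gamma (1 / γ) ^ s / (ε * γ ^ (s - 1) * Gamma (s / γ)) := by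
  obtain ⟨m, rfl⟩ : ∃ m, s = m + 1 := ⟨s - 1, by omega⟩
  rw [Gamma_add_one (by positivity), Gamma_add_one (by positivity), Nat.add_sub_cancel,
    one_div_mul_eq_div, div_pow]
  have hΓ := Gamma_pos_of_pos (by positivity : (0 : ℝ) < (m + 1 : ℕ) / γ)
  field_simp
  ring

theorem stmt_6 (s : ℕ) (hs : 0 < s) (γ ε : ℝ) (hγ : 0 < γ) (hε : 0 < ε) :
    ∫⁻ x in {x : Fin s → ℝ | (∀ i, 0 < x i) ∧ 1 ≤ pnorm γ x},
        ENNReal.ofReal (pnorm γ x ^ (-(s : ℝ) - ε)) =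
      ENNReal.ofReal (Real.Gamma (1 / γ) ^ s / (ε * γ ^ (s - 1) * Real.Gamma (s / γ))) := by
  have hset : {x : Fin s → ℝ | (∀ i, 0 < x i) ∧ 1 ≤ pnorm γ x} =
      pnorm γ ⁻¹' Ici 1 ∩ posOrthant s := by
    ext x
    simp [posOrthant, and_comm]
  rw [hset, ← Measure.restrict_restrict (measurable_pnorm γ measurableSet_Ici),
    ← lintegral_indicator (measurable_pnorm γ measurableSet_Ici)]
  change ∫⁻ x in _, (Ici 1).indicator (fun r => ENNReal.ofReal (r ^ (-(s : ℝ) - ε)))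
    (pnorm γ x) = _
  rw [setLIntegral_posOrthant_comp_pnorm hs hγ ((by fun_prop : Measurable fun r : ℝ =>
      ENNReal.ofReal (r ^ (-(s : ℝ) - ε))).indicator measurableSet_Ici),
    lintegral_mul_rpow_mul_indicator_Ici_one (Nat.cast_nonneg s) hε,
    volume_posOrthant_inter_pnorm_lt_one hs hγ, ← ENNReal.ofReal_mul (by positivity),
    Gamma_pow_div_Gamma_mul_div_eq hs hγ]
end

section
/- Let p > 1, 1/p + 1/q = 1, σ > 1, and let f, g : (0,∞) → [0,∞) be measurable with 0 < ∫₀^∞ x^{p(1−σ)−1} f(x)^p dx < ∞ and 0 < ∫₀^∞ y^{q(1+σ)−1} g(y)^q dy < ∞. Then ∫₀^∞∫₀^∞ (coth(x/y) − 1) f(x) g(y) dx dy < (Γ(σ)/2^{σ−1}) ζ(σ) · (∫₀^∞ x^{p(1−σ)−1} f(x)^p dx)^{1/p} (∫₀^∞ y^{q(1+σ)−1} g(y)^q dy)^{1/q}. -/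
open MeasureTheory Real Set

noncomputable def cothR (v : ℝ) : ℝ := (Real.exp v + Real.exp (-v)) / (Real.exp v - Real.exp (-v))
noncomputable def zetaR (σ : ℝ) : ℝ := ∑' k : ℕ+, (k : ℝ) ^ (-σ)

open scoped ENNReal

/-!
Put `φ(x) = x^(p(1-σ)-1) f(x)^p`, `ψ(y) = y^(q(1+σ)-1) g(y)^q` and `h(t) = t^σ (coth t - 1)`, so
that `(coth(x/y) - 1) f(x) g(y) = (φ(x) h(x/y) / y)^(1/p) (ψ(y) h(x/y) / x)^(1/q)`. Since `dt / t`
is invariant under `t ↦ c t` and `t ↦ c / t`, the two bases integrate over the quadrant to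
`C ∫ φ` and `C ∫ ψ`, where `C = ∫ h(t) dt / t = ∫ t^(σ-1) (coth t - 1) dt`. Expanding
`coth t - 1 = ∑_{k ≥ 1} 2 e^(-2kt)` and integrating termwise gives `C = Γ(σ) ζ(σ) / 2^(σ-1)`.
Hölder's inequality, proved through the weighted AM-GM inequality, gives the bound; it is strict
because equality would force `φ(x) = c / x` almost everywhere, which is not integrable on `(0, ∞)`.
-/

namespace HilbertCoth

theorem rpow_mul_rpow_eq_mul_div_rpow {a b u v A B : ℝ} (hu : 0 ≤ u) (hv : 0 ≤ v) (hA : 0 < A)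
    (hB : 0 < B) : u ^ a * v ^ b = A ^ a * B ^ b * ((u / A) ^ a * (v / B) ^ b) := by
  rw [div_rpow hu hA.le, div_rpow hv hB.le]
  have : 0 < A ^ a * B ^ b := by positivity
  field_simp

theorem geom_mean_le_scaled_arith_mean2_weighted {a b u v A B : ℝ} (ha : 0 ≤ a) (hb : 0 ≤ b)
    (hab : a + b = 1) (hu : 0 ≤ u) (hv : 0 ≤ v) (hA : 0 < A) (hB : 0 < B) :
    u ^ a * v ^ b ≤ A ^ a * B ^ b * (a / A * u + b / B * v) := by
  have key :=
    geom_mean_le_arith_mean2_weighted ha hb (div_nonneg hu hA.le) (div_nonneg hv hB.le) hab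
  calc u ^ a * v ^ b = A ^ a * B ^ b * ((u / A) ^ a * (v / B) ^ b) :=
        rpow_mul_rpow_eq_mul_div_rpow hu hv hA hB
    _ ≤ A ^ a * B ^ b * (a * (u / A) + b * (v / B)) := by gcongr
    _ = A ^ a * B ^ b * (a / A * u + b / B * v) := by ring

theorem geom_mean_lt_scaled_arith_mean2_weighted {a b u v A B : ℝ} (ha : 0 < a) (hb : 0 < b)
    (hab : a + b = 1) (hu : 0 ≤ u) (hv : 0 ≤ v) (hA : 0 < A) (hB : 0 < B) (hne : B * u ≠ A * v) :
    u ^ a * v ^ b < A ^ a * B ^ b * (a / A * u + b / B * v) := by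
  have hne' : u / A ≠ v / B := by
    rw [Ne, div_eq_div_iff hA.ne' hB.ne']; contrapose! hne; linarith
  have key := (geom_mean_lt_arith_mean2_weighted_iff_of_pos ha hb (div_nonneg hu hA.le)
    (div_nonneg hv hB.le) hab).2 hne'
  calc u ^ a * v ^ b = A ^ a * B ^ b * ((u / A) ^ a * (v / B) ^ b) :=
        rpow_mul_rpow_eq_mul_div_rpow hu hv hA hB
    _ < A ^ a * B ^ b * (a * (u / A) + b * (v / B)) := by gcongr
    _ = A ^ a * B ^ b * (a / A * u + b / B * v) := by ring

section StrictHolder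

variable {α : Type*} [MeasurableSpace α] {μ : Measure α}

theorem lintegral_rpow_mul_rpow_lt {a b : ℝ} (ha : 0 < a) (hb : 0 < b) (hab : a + b = 1)
    {u v : α → ℝ} (hum : AEMeasurable u μ) (hvm : AEMeasurable v μ)
    (hu : ∀ᵐ z ∂μ, 0 ≤ u z) (hv : ∀ᵐ z ∂μ, 0 ≤ v z) {A B : ℝ} (hA : 0 < A) (hB : 0 < B)
    (hAu : ∫⁻ z, ENNReal.ofReal (u z) ∂μ = ENNReal.ofReal A)
    (hBv : ∫⁻ z, ENNReal.ofReal (v z) ∂μ = ENNReal.ofReal B)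
    (hne : ¬ (fun z => B * u z) =ᵐ[μ] fun z => A * v z) :
    ∫⁻ z, ENNReal.ofReal (u z ^ a * v z ^ b) ∂μ < ENNReal.ofReal (A ^ a * B ^ b) := by
  set bound : α → ℝ := fun z => A ^ a * B ^ b * (a / A * u z + b / B * v z)
  have h_le : ∀ᵐ z ∂μ, ENNReal.ofReal (u z ^ a * v z ^ b) ≤ ENNReal.ofReal (bound z) := by
    filter_upwards [hu, hv] with z hz hz'
    exact ENNReal.ofReal_le_ofReal
      (geom_mean_le_scaled_arith_mean2_weighted ha.le hb.le hab hz hz' hA hB)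
  have h_bound : ∫⁻ z, ENNReal.ofReal (bound z) ∂μ = ENNReal.ofReal (A ^ a * B ^ b) := by
    have hsplit : ∀ᵐ z ∂μ, ENNReal.ofReal (bound z) = ENNReal.ofReal (A ^ a * B ^ b) *
        (ENNReal.ofReal (a / A) * ENNReal.ofReal (u z) +
          ENNReal.ofReal (b / B) * ENNReal.ofReal (v z)) := by
      filter_upwards [hu, hv] with z hz hz'
      have hAB : 0 ≤ A ^ a * B ^ b := by positivity
      have hu' : 0 ≤ a / A * u z := mul_nonneg (by positivity) hz
      have hv' : 0 ≤ b / B * v z := mul_nonneg (by positivity) hz'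
      rw [ENNReal.ofReal_mul hAB, ENNReal.ofReal_add hu' hv',
        ENNReal.ofReal_mul (div_nonneg ha.le hA.le), ENNReal.ofReal_mul (div_nonneg hb.le hB.le)]
    rw [lintegral_congr_ae hsplit, lintegral_const_mul'' _ (by fun_prop),
      lintegral_add_left' (by fun_prop), lintegral_const_mul'' _ (by fun_prop),
      lintegral_const_mul'' _ (by fun_prop), hAu, hBv, ← ENNReal.ofReal_mul (by positivity),
      ← ENNReal.ofReal_mul (by positivity), ← ENNReal.ofReal_add (by positivity) (by positivity),
      div_mul_cancel₀ a hA.ne', div_mul_cancel₀ b hB.ne', hab, ENNReal.ofReal_one, mul_one]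
  rw [← h_bound]
  refine lintegral_strict_mono_of_ae_le_of_frequently_ae_lt (by fun_prop)
    (ne_top_of_le_ne_top (h_bound ▸ ENNReal.ofReal_ne_top) (lintegral_mono_ae h_le)) h_le ?_
  refine ((Filter.not_eventually.mp hne).and_eventually (hu.and hv)).mono ?_
  rintro z ⟨hz, hz0, hz0'⟩
  refine ne_of_lt <| (ENNReal.ofReal_lt_ofReal_iff_of_nonneg ?_).2
    (geom_mean_lt_scaled_arith_mean2_weighted ha hb hab hz0 hz0' hA hB hz)
  exact mul_nonneg (rpow_nonneg hz0 a) (rpow_nonneg hz0' b)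

end StrictHolder

theorem lintegral_Ioi_comp_div_const (k : ℝ → ℝ) {y : ℝ} (hy : 0 < y) :
    ∫⁻ x in Ioi 0, ENNReal.ofReal (k (x / y) / x) = ∫⁻ t in Ioi 0, ENNReal.ofReal (k t / t) := by
  have himage : (fun t => y * t) '' Ioi 0 = Ioi 0 := by
    simpa using image_const_mul_Ioi_zero hy
  have hderiv : ∀ t ∈ Ioi (0:ℝ), HasDerivWithinAt (fun t => y * t) y (Ioi 0) t :=
    fun t _ => by simpa using ((hasDerivAt_id t).const_mul y).hasDerivWithinAt
  conv_lhs => rw [← himage, lintegral_image_eq_lintegral_abs_deriv_mul measurableSet_Ioi hderiv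
    (mul_right_injective₀ hy.ne').injOn]
  refine setLIntegral_congr_fun measurableSet_Ioi fun t (ht : 0 < t) => ?_
  rw [abs_of_pos hy, ← ENNReal.ofReal_mul hy.le, mul_div_cancel_left₀ t hy.ne']
  congr 1
  field_simp

theorem lintegral_Ioi_comp_const_div (k : ℝ → ℝ) {x : ℝ} (hx : 0 < x) :
    ∫⁻ y in Ioi 0, ENNReal.ofReal (k (x / y) / y) = ∫⁻ t in Ioi 0, ENNReal.ofReal (k t / t) := by
  have himage : (fun t => x / t) '' Ioi 0 = Ioi 0 := by
    ext y
    refine ⟨?_, fun (hy : 0 < y) => ⟨x / y, div_pos hx hy, div_div_cancel₀ hx.ne'⟩⟩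
    rintro ⟨t, ht : 0 < t, rfl⟩
    exact div_pos hx ht
  have hderiv : ∀ t ∈ Ioi (0:ℝ), HasDerivWithinAt (fun t => x / t) (-(x / t ^ 2)) (Ioi 0) t :=
    fun t ht => by
      simpa [div_eq_mul_inv] using ((hasDerivAt_inv (ne_of_gt ht)).const_mul x).hasDerivWithinAt
  have hinj : InjOn (fun t => x / t) (Ioi 0) := fun s _ t _ hst =>
    inv_injective (mul_left_cancel₀ hx.ne' (by simpa [div_eq_mul_inv] using hst))
  conv_lhs =>
    rw [← himage, lintegral_image_eq_lintegral_abs_deriv_mul measurableSet_Ioi hderiv hinj]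
  refine setLIntegral_congr_fun measurableSet_Ioi fun t (ht : 0 < t) => ?_
  rw [abs_neg, abs_of_pos (by positivity), ← ENNReal.ofReal_mul (by positivity),
    div_div_cancel₀ hx.ne']
  congr 1
  field_simp

theorem exists_ae_eq_const_of_ae_prod {β γ δ : Type*} [MeasurableSpace β] [MeasurableSpace γ]
    {μ : Measure β} {ν : Measure γ} [SFinite ν] [NeZero μ] [NeZero ν] {u : β → δ} {v : γ → δ}
    (h : ∀ᵐ z ∂μ.prod ν, u z.1 = v z.2) : ∃ c, ∀ᵐ x ∂μ, u x = c := by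
  have h' := Measure.ae_ae_of_ae_prod h
  obtain ⟨x₀, hx₀⟩ := h'.exists
  refine ⟨u x₀, h'.mono fun x hx => ?_⟩
  obtain ⟨y, hy, hy₀⟩ := (hx.and hx₀).exists
  exact hy.trans hy₀.symm

instance : NeZero (volume (Ioi (0:ℝ))) := ⟨by simp⟩

theorem not_ae_mul_eq_const_of_integrableOn {φ : ℝ → ℝ} (hφ : IntegrableOn φ (Ioi 0))
    (hpos : 0 < ∫ x in Ioi 0, φ x) (c : ℝ) : ¬ ∀ᵐ x ∂volume.restrict (Ioi 0), x * φ x = c := by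
  intro h
  have hφc : φ =ᵐ[volume.restrict (Ioi 0)] fun x => c * x⁻¹ := by
    filter_upwards [h, ae_restrict_mem measurableSet_Ioi] with x hx (hx0 : 0 < x)
    rw [← hx]; field_simp
  rcases eq_or_ne c 0 with rfl | hc
  · simp [integral_congr_ae hφc] at hpos
  · refine not_integrableOn_Ioi_inv (a := 0) ((hφ.congr_fun_ae hφc).const_mul c⁻¹ |>.congr ?_)
    exact Filter.Eventually.of_forall fun x => by field_simp

section HomogeneousKernel

local notation "μ₊" => volume.restrict (Ioi (0:ℝ))

variable {h φ ψ : ℝ → ℝ} {M : ℝ}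

theorem ae_fst_pos_and_snd_pos : ∀ᵐ z ∂μ₊.prod μ₊, 0 < z.1 ∧ 0 < z.2 :=
  (Measure.quasiMeasurePreserving_fst.ae (ae_restrict_mem measurableSet_Ioi)).and
    (Measure.quasiMeasurePreserving_snd.ae (ae_restrict_mem measurableSet_Ioi))

theorem lintegral_prod_mul_kernel_div_snd (hh : Measurable h)
    (hM : ∫⁻ t in Ioi 0, ENNReal.ofReal (h t / t) = ENNReal.ofReal M)
    (hφ : IntegrableOn φ (Ioi 0)) (hφ0 : ∀ᵐ x ∂μ₊, 0 ≤ φ x) :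
    ∫⁻ z, ENNReal.ofReal (φ z.1 * (h (z.1 / z.2) / z.2)) ∂μ₊.prod μ₊ =
      ENNReal.ofReal (M * ∫ x in Ioi 0, φ x) := by
  have hinner : ∀ᵐ x ∂μ₊, ∫⁻ y in Ioi 0, ENNReal.ofReal (φ x * (h (x / y) / y)) =
      ENNReal.ofReal (φ x) * ENNReal.ofReal M := by
    filter_upwards [hφ0, ae_restrict_mem measurableSet_Ioi] with x hx (hx0 : 0 < x)
    simp_rw [ENNReal.ofReal_mul hx]
    rw [lintegral_const_mul' _ _ ENNReal.ofReal_ne_top, lintegral_Ioi_comp_const_div h hx0, hM]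
  have hφm : AEMeasurable (fun z : ℝ × ℝ => φ z.1) (μ₊.prod μ₊) := hφ.aemeasurable.comp_fst
  have hkm : Measurable fun z : ℝ × ℝ => h (z.1 / z.2) / z.2 := by fun_prop
  rw [lintegral_prod (fun z => ENNReal.ofReal (φ z.1 * (h (z.1 / z.2) / z.2)))
      (hφm.mul hkm.aemeasurable).ennreal_ofReal,
    lintegral_congr_ae hinner, lintegral_mul_const'' _ hφ.aemeasurable.ennreal_ofReal,
    ← ofReal_integral_eq_lintegral_ofReal hφ hφ0,
    ← ENNReal.ofReal_mul (integral_nonneg_of_ae hφ0), mul_comm]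

theorem lintegral_prod_mul_kernel_div_fst (hh : Measurable h)
    (hM : ∫⁻ t in Ioi 0, ENNReal.ofReal (h t / t) = ENNReal.ofReal M)
    (hψ : IntegrableOn ψ (Ioi 0)) (hψ0 : ∀ᵐ y ∂μ₊, 0 ≤ ψ y) :
    ∫⁻ z, ENNReal.ofReal (ψ z.2 * (h (z.1 / z.2) / z.1)) ∂μ₊.prod μ₊ =
      ENNReal.ofReal (M * ∫ y in Ioi 0, ψ y) := by
  have hinner : ∀ᵐ y ∂μ₊, ∫⁻ x in Ioi 0, ENNReal.ofReal (ψ y * (h (x / y) / x)) =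
      ENNReal.ofReal (ψ y) * ENNReal.ofReal M := by
    filter_upwards [hψ0, ae_restrict_mem measurableSet_Ioi] with y hy (hy0 : 0 < y)
    simp_rw [ENNReal.ofReal_mul hy]
    rw [lintegral_const_mul' _ _ ENNReal.ofReal_ne_top, lintegral_Ioi_comp_div_const h hy0, hM]
  have hψm : AEMeasurable (fun z : ℝ × ℝ => ψ z.2) (μ₊.prod μ₊) := hψ.aemeasurable.comp_snd
  have hkm : Measurable fun z : ℝ × ℝ => h (z.1 / z.2) / z.1 := by fun_prop
  rw [lintegral_prod_symm (fun z => ENNReal.ofReal (ψ z.2 * (h (z.1 / z.2) / z.1)))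
      (hψm.mul hkm.aemeasurable).ennreal_ofReal,
    lintegral_congr_ae hinner, lintegral_mul_const'' _ hψ.aemeasurable.ennreal_ofReal,
    ← ofReal_integral_eq_lintegral_ofReal hψ hψ0,
    ← ENNReal.ofReal_mul (integral_nonneg_of_ae hψ0), mul_comm]

theorem pos_of_lintegral_Ioi_eq_ofReal (hh : Measurable h) (hh0 : ∀ t, 0 < t → 0 < h t)
    (hM : ∫⁻ t in Ioi 0, ENNReal.ofReal (h t / t) = ENNReal.ofReal M) : 0 < M := by
  rw [← ENNReal.ofReal_pos, ← hM, setLIntegral_pos_iff (by fun_prop)]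
  have hsupp : Function.support (fun t => ENNReal.ofReal (h t / t)) ∩ Ioi 0 = Ioi 0 :=
    inter_eq_right.2 fun t (ht : 0 < t) => by simpa using div_pos (hh0 t ht) ht
  simp [hsupp]

theorem lintegral_prod_kernel_rpow_mul_rpow_lt {a b : ℝ} (ha : 0 < a) (hb : 0 < b)
    (hab : a + b = 1) (hh : Measurable h) (hh0 : ∀ t, 0 < t → 0 < h t)
    (hM : ∫⁻ t in Ioi 0, ENNReal.ofReal (h t / t) = ENNReal.ofReal M)
    (hφ : IntegrableOn φ (Ioi 0)) (hφ0 : ∀ᵐ x ∂μ₊, 0 ≤ φ x) (hφpos : 0 < ∫ x in Ioi 0, φ x)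
    (hψ : IntegrableOn ψ (Ioi 0)) (hψ0 : ∀ᵐ y ∂μ₊, 0 ≤ ψ y) (hψpos : 0 < ∫ y in Ioi 0, ψ y) :
    ∫⁻ z, ENNReal.ofReal ((φ z.1 * (h (z.1 / z.2) / z.2)) ^ a *
        (ψ z.2 * (h (z.1 / z.2) / z.1)) ^ b) ∂μ₊.prod μ₊ <
      ENNReal.ofReal (M * ((∫ x in Ioi 0, φ x) ^ a * (∫ y in Ioi 0, ψ y) ^ b)) := by
  set A := ∫ x in Ioi 0, φ x
  set B := ∫ y in Ioi 0, ψ y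
  have hMpos := pos_of_lintegral_Ioi_eq_ofReal hh hh0 hM
  have hconst : (M * A) ^ a * (M * B) ^ b = M * (A ^ a * B ^ b) := by
    rw [mul_rpow hMpos.le hφpos.le, mul_rpow hMpos.le hψpos.le, mul_mul_mul_comm,
      ← rpow_add hMpos, hab, rpow_one]
  have hkm : Measurable fun z : ℝ × ℝ => h (z.1 / z.2) := by fun_prop
  have hu0 : ∀ᵐ z ∂μ₊.prod μ₊, 0 ≤ φ z.1 * (h (z.1 / z.2) / z.2) := by
    filter_upwards [Measure.quasiMeasurePreserving_fst.ae hφ0, ae_fst_pos_and_snd_pos]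
      with z hz ⟨hx, hy⟩
    exact mul_nonneg hz (div_nonneg (hh0 _ (div_pos hx hy)).le hy.le)
  have hv0 : ∀ᵐ z ∂μ₊.prod μ₊, 0 ≤ ψ z.2 * (h (z.1 / z.2) / z.1) := by
    filter_upwards [Measure.quasiMeasurePreserving_snd.ae hψ0, ae_fst_pos_and_snd_pos]
      with z hz ⟨hx, hy⟩
    exact mul_nonneg hz (div_nonneg (hh0 _ (div_pos hx hy)).le hx.le)
  rw [← hconst]
  refine lintegral_rpow_mul_rpow_lt ha hb hab
    (u := fun z : ℝ × ℝ => φ z.1 * (h (z.1 / z.2) / z.2))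
    (v := fun z : ℝ × ℝ => ψ z.2 * (h (z.1 / z.2) / z.1))
    (hφ.aemeasurable.comp_fst.mul (hkm.div measurable_snd).aemeasurable)
    (hψ.aemeasurable.comp_snd.mul (hkm.div measurable_fst).aemeasurable) hu0 hv0
    (mul_pos hMpos hφpos) (mul_pos hMpos hψpos) (lintegral_prod_mul_kernel_div_snd hh hM hφ hφ0)
    (lintegral_prod_mul_kernel_div_fst hh hM hψ hψ0) fun heq => ?_
  have hsep : ∀ᵐ z ∂μ₊.prod μ₊, B * (z.1 * φ z.1) = A * (z.2 * ψ z.2) := by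
    filter_upwards [heq, ae_fst_pos_and_snd_pos] with z hz ⟨hx, hy⟩
    have hk := hh0 _ (div_pos hx hy)
    field_simp at hz
    linear_combination hz
  obtain ⟨c, hc⟩ := exists_ae_eq_const_of_ae_prod
    (u := fun x => B * (x * φ x)) (v := fun y => A * (y * ψ y)) hsep
  refine not_ae_mul_eq_const_of_integrableOn hφ hφpos (c / B) (hc.mono fun x hx => ?_)
  rw [← hx]; field_simp

end HomogeneousKernel

@[fun_prop]
theorem measurable_cothR : Measurable cothR := by
  unfold cothR; fun_prop

theorem cothR_sub_one_eq {t : ℝ} (ht : 0 < t) :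
    cothR t - 1 = 2 * exp (-(2 * t)) / (1 - exp (-(2 * t))) := by
  have hsq : exp (-(2 * t)) = exp (-t) ^ 2 := by rw [← exp_nat_mul]; ring_nf
  have hinv : exp t = (exp (-t))⁻¹ := by rw [exp_neg, inv_inv]
  have ha0 := exp_pos (-t)
  have ha1 : exp (-t) < 1 := exp_lt_one_iff.2 (by linarith)
  rw [cothR, hsq, hinv]
  generalize exp (-t) = a at ha0 ha1 ⊢
  have h1 : 1 - a ^ 2 ≠ 0 := by nlinarith
  have h2 : a⁻¹ - a ≠ 0 := (sub_pos.2 (ha1.trans ((one_lt_inv₀ ha0).2 ha1))).ne'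
  field_simp
  ring

theorem cothR_sub_one_pos {t : ℝ} (ht : 0 < t) : 0 < cothR t - 1 := by
  have hlt : exp (-(2 * t)) < 1 := exp_lt_one_iff.2 (by linarith)
  rw [cothR_sub_one_eq ht]
  exact div_pos (by positivity) (by linarith)

theorem hasSum_cothR_sub_one {t : ℝ} (ht : 0 < t) :
    HasSum (fun k : ℕ+ => 2 * exp (-(2 * k * t))) (cothR t - 1) := by
  set r := exp (-(2 * t))
  have hr : r < 1 := exp_lt_one_iff.2 (by linarith)
  have hgeom : HasSum (fun n : ℕ => 2 * r * r ^ n) (2 * r / (1 - r)) := by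
    simpa [div_eq_mul_inv] using (hasSum_geometric_of_lt_one (exp_pos _).le hr).mul_left (2 * r)
  rw [cothR_sub_one_eq ht]
  refine hasSum_pnat_iff_hasSum_succ (f := fun n : ℕ => 2 * exp (-(2 * n * t))) |>.2 ?_
  convert hgeom using 2 with n
  have hpow : r ^ (n + 1) = exp (-(2 * (n + 1 : ℕ) * t)) := by
    rw [← exp_nat_mul]; ring_nf
  rw [← hpow, pow_succ']; ring

theorem lintegral_rpow_mul_exp_neg_mul_Ioi {a r : ℝ} (ha : 0 < a) (hr : 0 < r) :
    ∫⁻ t in Ioi 0, ENNReal.ofReal (t ^ (a - 1) * exp (-(r * t))) =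
      ENNReal.ofReal ((1 / r) ^ a * Gamma a) := by
  have hint : IntegrableOn (fun t : ℝ => t ^ (a - 1) * exp (-(r * t))) (Ioi 0) := by
    refine (integrableOn_rpow_mul_exp_neg_mul_rpow (s := a - 1) (by linarith) one_pos hr)
      |>.congr_fun (fun t _ => ?_) measurableSet_Ioi
    simp
  rw [← integral_rpow_mul_exp_neg_mul_Ioi ha hr, ofReal_integral_eq_lintegral_ofReal hint]
  filter_upwards [ae_restrict_mem measurableSet_Ioi] with t (ht : 0 < t)
  positivity

theorem hasSum_gamma_div_two_rpow_mul_zetaR {σ : ℝ} (hσ : 1 < σ) :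
    HasSum (fun k : ℕ+ => 2 * ((1 / (2 * k)) ^ σ * Gamma σ))
      (Gamma σ / 2 ^ (σ - 1) * zetaR σ) := by
  have hzeta : Summable fun k : ℕ+ => (k : ℝ) ^ (-σ) :=
    (summable_nat_rpow.2 (by linarith)).comp_injective PNat.coe_injective
  refine (hzeta.hasSum.mul_left (Gamma σ / 2 ^ (σ - 1))).congr_fun fun k => ?_
  have hk : (0 : ℝ) < k := by exact_mod_cast k.pos
  rw [one_div, mul_inv, mul_rpow (by norm_num) (by positivity), inv_rpow (by norm_num),
    inv_rpow hk.le, rpow_neg hk.le, rpow_sub_one (by norm_num)]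
  field_simp

theorem lintegral_rpow_mul_cothR_sub_one {σ : ℝ} (hσ : 1 < σ) :
    ∫⁻ t in Ioi 0, ENNReal.ofReal (t ^ (σ - 1) * (cothR t - 1)) =
      ENNReal.ofReal (Gamma σ / 2 ^ (σ - 1) * zetaR σ) := by
  have hseries : ∀ t ∈ Ioi (0:ℝ), ENNReal.ofReal (t ^ (σ - 1) * (cothR t - 1)) =
      ∑' k : ℕ+, ENNReal.ofReal (t ^ (σ - 1) * exp (-(2 * k * t))) * 2 := by
    intro t (ht : 0 < t)
    rw [((hasSum_cothR_sub_one ht).mul_left (t ^ (σ - 1))).tsum_eq.symm,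
      ENNReal.ofReal_tsum_of_nonneg (fun k => by positivity)
        ((hasSum_cothR_sub_one ht).mul_left _).summable]
    congr 1 with k
    rw [← ENNReal.ofReal_ofNat 2, ← ENNReal.ofReal_mul (by positivity)]
    ring_nf
  have hterm : ∀ k : ℕ+, ∫⁻ t in Ioi 0, ENNReal.ofReal (t ^ (σ - 1) * exp (-(2 * k * t))) * 2 =
      ENNReal.ofReal (2 * ((1 / (2 * k)) ^ σ * Gamma σ)) := by
    intro k
    rw [lintegral_mul_const' _ _ ENNReal.ofNat_ne_top,
      lintegral_rpow_mul_exp_neg_mul_Ioi (by linarith) (by positivity), ← ENNReal.ofReal_ofNat 2,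
      ← ENNReal.ofReal_mul (by positivity), mul_comm]
  have hsum := hasSum_gamma_div_two_rpow_mul_zetaR hσ
  rw [setLIntegral_congr_fun measurableSet_Ioi hseries, lintegral_tsum (fun k => by fun_prop),
    tsum_congr hterm, ← ENNReal.ofReal_tsum_of_nonneg (fun k => by positivity) hsum.summable,
    hsum.tsum_eq]

theorem mul_mul_eq_rpow_mul_rpow {p q σ x y κ a b : ℝ} (hp : p ≠ 0) (hq : q ≠ 0)
    (hpq : 1 / p + 1 / q = 1) (hx : 0 < x) (hy : 0 < y) (hκ : 0 < κ) (ha : 0 ≤ a) (hb : 0 ≤ b) :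
    κ * a * b = (x ^ (p * (1 - σ) - 1) * a ^ p * ((x / y) ^ σ * κ / y)) ^ (1 / p) *
      (y ^ (q * (1 + σ) - 1) * b ^ q * ((x / y) ^ σ * κ / x)) ^ (1 / q) := by
  set P := x ^ (p * (1 - σ) - 1) * ((x / y) ^ σ * κ / y)
  set Q := y ^ (q * (1 + σ) - 1) * ((x / y) ^ σ * κ / x)
  have hP : 0 < P := by positivity
  have hQ : 0 < Q := by positivity
  have hlogP : log P = (p * (1 - σ) - 1) * log x + σ * (log x - log y) + log κ - log y := by
    rw [log_mul (by positivity) (by positivity), log_div (by positivity) hy.ne',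
      log_mul (by positivity) hκ.ne', log_rpow hx, log_rpow (div_pos hx hy), log_div hx.ne' hy.ne']
    ring
  have hlogQ : log Q = (q * (1 + σ) - 1) * log y + σ * (log x - log y) + log κ - log x := by
    rw [log_mul (by positivity) (by positivity), log_div (by positivity) hx.ne',
      log_mul (by positivity) hκ.ne', log_rpow hy, log_rpow (div_pos hx hy), log_div hx.ne' hy.ne']
    ring
  have hPQ : P ^ (1 / p) * Q ^ (1 / q) = κ := by
    rw [rpow_def_of_pos hP, rpow_def_of_pos hQ, ← exp_add, ← exp_log hκ, hlogP, hlogQ]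
    congr 1
    have hpu : p * (1 / p) = 1 := mul_one_div_cancel hp
    have hqv : q * (1 / q) = 1 := mul_one_div_cancel hq
    linear_combination (1 - σ) * log x * hpu + (1 + σ) * log y * hqv +
      (σ * log x - σ * log y + log κ - log x - log y) * hpq
  rw [mul_right_comm _ (a ^ p), mul_right_comm _ (b ^ q), mul_rpow hP.le (by positivity),
    mul_rpow hQ.le (by positivity), one_div, one_div, rpow_rpow_inv ha hp, rpow_rpow_inv hb hq,
    ← one_div, ← one_div]
  linear_combination (-(a * b)) * hPQ

theorem integral_integral_lt_of_lintegral_prod_lt {β γ : Type*} [MeasurableSpace β]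
    [MeasurableSpace γ] {μ : Measure β} {ν : Measure γ} [SFinite μ] [SFinite ν]
    {F : β × γ → ℝ} (hF : AEStronglyMeasurable F (μ.prod ν)) (hF0 : ∀ᵐ z ∂μ.prod ν, 0 ≤ F z)
    {c : ℝ} (h : ∫⁻ z, ENNReal.ofReal (F z) ∂μ.prod ν < ENNReal.ofReal c) :
    ∫ y, ∫ x, F (x, y) ∂μ ∂ν < c := by
  have hint : Integrable F (μ.prod ν) :=
    ⟨hF, (hasFiniteIntegral_iff_ofReal hF0).2 (h.trans ENNReal.ofReal_lt_top)⟩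
  rw [← integral_prod_symm F hint, integral_eq_lintegral_of_nonneg_ae hF0 hF]
  exact ENNReal.toReal_lt_of_lt_ofReal h

end HilbertCoth

open HilbertCoth

theorem stmt_11 (p q σ : ℝ) (hp : 1 < p) (hpq : 1 / p + 1 / q = 1) (hσ : 1 < σ)
    (f g : ℝ → ℝ) (hf : Measurable f) (hg : Measurable g)
    (hf0 : ∀ x, 0 ≤ f x) (hg0 : ∀ y, 0 ≤ g y)
    (hfi : IntegrableOn (fun x => x ^ (p * (1 - σ) - 1) * f x ^ p) (Ioi 0) volume)
    (hfpos : 0 < ∫ x in Ioi (0:ℝ), x ^ (p * (1 - σ) - 1) * f x ^ p)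
    (hgi : IntegrableOn (fun y => y ^ (q * (1 + σ) - 1) * g y ^ q) (Ioi 0) volume)
    (hgpos : 0 < ∫ y in Ioi (0:ℝ), y ^ (q * (1 + σ) - 1) * g y ^ q) :
    ∫ y in Ioi (0:ℝ), ∫ x in Ioi (0:ℝ), (cothR (x / y) - 1) * f x * g y <
      (Real.Gamma σ / 2 ^ (σ - 1)) * zetaR σ *
        ((∫ x in Ioi (0:ℝ), x ^ (p * (1 - σ) - 1) * f x ^ p) ^ (1 / p) *
          (∫ y in Ioi (0:ℝ), y ^ (q * (1 + σ) - 1) * g y ^ q) ^ (1 / q)) := by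
  have hp0 : 0 < 1 / p := by positivity
  have hq0 : 0 < 1 / q := by linarith [(div_lt_one (by linarith : (0:ℝ) < p)).2 hp]
  set h : ℝ → ℝ := fun t => t ^ σ * (cothR t - 1)
  have hM : ∫⁻ t in Ioi 0, ENNReal.ofReal (h t / t) =
      ENNReal.ofReal (Gamma σ / 2 ^ (σ - 1) * zetaR σ) := by
    rw [← lintegral_rpow_mul_cothR_sub_one hσ]
    refine setLIntegral_congr_fun measurableSet_Ioi fun t (ht : 0 < t) => ?_
    rw [rpow_sub_one ht.ne', div_mul_eq_mul_div]
  have hφ0 : ∀ᵐ x ∂volume.restrict (Ioi 0), 0 ≤ x ^ (p * (1 - σ) - 1) * f x ^ p := by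
    filter_upwards [ae_restrict_mem measurableSet_Ioi] with x (hx : 0 < x)
    exact mul_nonneg (rpow_nonneg hx.le _) (rpow_nonneg (hf0 x) _)
  have hψ0 : ∀ᵐ y ∂volume.restrict (Ioi 0), 0 ≤ y ^ (q * (1 + σ) - 1) * g y ^ q := by
    filter_upwards [ae_restrict_mem measurableSet_Ioi] with y (hy : 0 < y)
    exact mul_nonneg (rpow_nonneg hy.le _) (rpow_nonneg (hg0 y) _)
  have hbound := lintegral_prod_kernel_rpow_mul_rpow_lt hp0 hq0 hpq (h := h) (by fun_prop)
    (fun t ht => mul_pos (rpow_pos_of_pos ht σ) (cothR_sub_one_pos ht)) hM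
    hfi hφ0 hfpos hgi hψ0 hgpos
  have hsplit := ae_fst_pos_and_snd_pos.mono fun z ⟨hx, hy⟩ =>
    mul_mul_eq_rpow_mul_rpow (σ := σ) (one_div_pos.1 hp0).ne' (one_div_pos.1 hq0).ne' hpq hx hy
      (cothR_sub_one_pos (div_pos hx hy)) (hf0 z.1) (hg0 z.2)
  refine integral_integral_lt_of_lintegral_prod_lt
    (F := fun z => (cothR (z.1 / z.2) - 1) * f z.1 * g z.2) (by fun_prop) ?_ ?_
  · filter_upwards [ae_fst_pos_and_snd_pos] with z ⟨hx, hy⟩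
    exact mul_nonneg (mul_nonneg (cothR_sub_one_pos (div_pos hx hy)).le (hf0 _)) (hg0 _)
  · rwa [lintegral_congr_ae (hsplit.mono fun z hz => congrArg ENNReal.ofReal hz)]
end
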